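/- (Symmetric Trotter estimate, Banach-algebra form of Theorem 3.1.) Let A be a complete normed unital algebra over ℝ or ℂ, let a_1, …, a_k ∈ A and a = a_1 + ⋯ + a_k. Define σ(μ) = exp(μ·a_1/2)···exp(μ·a_k/2) · exp(μ·a_k/2)···exp(μ·a_1/2). Then for every T > 0 there exists a constant C > 0 (depending on k, T and the norms ‖a_1‖, …, ‖a_k‖) such that for all t ∈ [0, T] and all integers n ≥ 1, ‖exp(t·a) − σ(t/n)^n‖ ≤ C·t^3/n^2. -/

import Mathlib

/-!
Both `exp (s • a)` and `σ(s)` agree with `1 + s • a + (s² / 2) • a²` up to `O(s³)`. Replacing each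
exponential by this quadratic Taylor polynomial reduces the Strang splitting
`exp (s • (2x + y)) ≈ exp (s • x) * exp (s • y) * exp (s • x)` to a polynomial identity in which
all terms of degree `≤ 2` in `s` cancel; peeling the outer factors off `σ` one at a time then gives
the local error `‖exp (s • a) - σ(s)‖ = O(s³)` on compact sets. Left multiplication by `σ(s)` and
right multiplication by `exp (s • a)` have norm at most `exp (s ∑ ‖aᵢ‖)`, so in the telescoping
sum for `exp (s • a) ^ n - σ(s) ^ n` with `s = t / n` each of the `n` terms is `O((t / n)³)`.
-/

/-- The symmetric (Trotter–Suzuki) product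
`σ^{(1)}_μ = exp(μ a₁/2) ⋯ exp(μ a_k/2) · exp(μ a_k/2) ⋯ exp(μ a₁/2)`
in a complete normed unital algebra. -/
noncomputable def symTrotterProd {A : Type*} [NormedRing A] [NormedAlgebra ℝ A]
    (k : ℕ) (a : Fin k → A) (s : ℝ) : A :=
  (List.ofFn fun i => (NormedSpace.expSeries ℝ A).sum ((s / 2) • a i)).prod *
  (List.ofFn fun i => (NormedSpace.expSeries ℝ A).sum ((s / 2) • a i)).reverse.prod

open NormedSpace Asymptotics Filter Set
open scoped Nat

section ExpBounds

variable {A : Type*} [NormedRing A]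

lemma norm_pow_mul_le (b w : A) (n : ℕ) : ‖b ^ n * w‖ ≤ ‖b‖ ^ n * ‖w‖ := by
  induction n with
  | zero => simp
  | succ n ih =>
    calc ‖b ^ (n + 1) * w‖ = ‖b * (b ^ n * w)‖ := by rw [pow_succ', mul_assoc]
      _ ≤ ‖b‖ * (‖b‖ ^ n * ‖w‖) := norm_mul_le_of_le le_rfl ih
      _ = ‖b‖ ^ (n + 1) * ‖w‖ := by ring

lemma norm_pow_sub_pow_le {b c : A} {L ε : ℝ} (hL : 0 ≤ L) (hb : ∀ w, ‖b * w‖ ≤ L * ‖w‖)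
    (hc : ∀ w, ‖w * c‖ ≤ L * ‖w‖) (hbc : ‖c - b‖ ≤ ε) (n : ℕ) :
    ‖c ^ (n + 1) - b ^ (n + 1)‖ ≤ (n + 1) * L ^ n * ε := by
  have hcpow : ∀ m : ℕ, ‖(c - b) * c ^ m‖ ≤ L ^ m * ε := by
    intro m
    induction m with
    | zero => simpa using hbc
    | succ m ih =>
      calc ‖(c - b) * c ^ (m + 1)‖ = ‖(c - b) * c ^ m * c‖ := by rw [pow_succ, mul_assoc]
        _ ≤ L * (L ^ m * ε) := (hc _).trans (by gcongr)
        _ = L ^ (m + 1) * ε := by ring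
  induction n with
  | zero => simpa using hbc
  | succ n ih =>
    calc ‖c ^ (n + 1 + 1) - b ^ (n + 1 + 1)‖
        = ‖b * (c ^ (n + 1) - b ^ (n + 1)) + (c - b) * c ^ (n + 1)‖ := by
          congr 1; rw [mul_sub, sub_mul, ← pow_succ', ← pow_succ']; abel
      _ ≤ L * ((n + 1) * L ^ n * ε) + L ^ (n + 1) * ε :=
          (norm_add_le _ _).trans (add_le_add ((hb _).trans (by gcongr)) (hcpow _))
      _ = (↑(n + 1) + 1) * L ^ (n + 1) * ε := by push_cast; ring

variable [NormedAlgebra ℝ A] [CompleteSpace A]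

lemma norm_exp_mul_le (b w : A) : ‖exp b * w‖ ≤ Real.exp ‖b‖ * ‖w‖ := by
  refine ((exp_series_hasSum_exp' (𝕂 := ℝ) b).mul_right w).norm_le_of_bounded
    ((Real.exp_eq_exp_ℝ ▸ expSeries_div_hasSum_exp ‖b‖).mul_right ‖w‖) fun n => ?_
  rw [smul_mul_assoc, norm_smul, norm_inv, RCLike.norm_natCast, div_eq_inv_mul, mul_assoc]
  gcongr
  exact norm_pow_mul_le b w n

lemma norm_mul_exp_le (w b : A) : ‖w * exp b‖ ≤ ‖w‖ * Real.exp ‖b‖ := by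
  have h := norm_exp_mul_le (MulOpposite.op b) (MulOpposite.op w)
  rwa [exp_op, ← MulOpposite.op_mul, MulOpposite.norm_op, MulOpposite.norm_op,
    MulOpposite.norm_op, mul_comm] at h

noncomputable def expTaylor₂ (b : A) (s : ℝ) : A := 1 + s • b + (s ^ 2 / 2) • b ^ 2

lemma norm_exp_smul_sub_expTaylor₂_le (b : A) (s : ℝ) :
    ‖exp (s • b) - expTaylor₂ b s‖ ≤ ‖s • b‖ ^ 3 * Real.exp ‖s • b‖ := by
  set c := s • b
  have htail := (hasSum_nat_add_iff' 3).mpr (exp_series_hasSum_exp' (𝕂 := ℝ) c)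
  have hhead : ∑ i ∈ Finset.range 3, ((i ! : ℝ)⁻¹ • c ^ i) = expTaylor₂ b s := by
    simp [Finset.sum_range_succ, expTaylor₂, c, smul_pow, smul_smul, div_eq_inv_mul]
  rw [hhead] at htail
  refine htail.norm_le_of_bounded
    ((Real.exp_eq_exp_ℝ ▸ expSeries_div_hasSum_exp ‖c‖).mul_left (‖c‖ ^ 3)) fun n => ?_
  have hfact : ((n + 3) ! : ℝ)⁻¹ ≤ (n ! : ℝ)⁻¹ := by
    gcongr
    omega
  rw [norm_smul, norm_inv, RCLike.norm_natCast, div_eq_inv_mul, mul_left_comm, ← pow_add,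
    add_comm 3 n]
  gcongr
  exact norm_pow_le' c (by omega)

end ExpBounds

section Asymptotics

variable {K : Set ℝ}

lemma ContinuousOn.isBigO_one_principal {E : Type*} [NormedAddCommGroup E] {f : ℝ → E}
    (hf : ContinuousOn f K) (hK : IsCompact K) : f =O[𝓟 K] (fun _ => (1 : ℝ)) :=
  hf.isBigO_principal hK (by norm_num)

lemma isBigO_pow_smul_of_continuousOn {E : Type*} [NormedAddCommGroup E] [NormedSpace ℝ E]
    (hK : IsCompact K) {g : ℝ → E} (hg : ContinuousOn g K) (n : ℕ) :
    (fun s => s ^ n • g s) =O[𝓟 K] (· ^ n) := by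
  simpa using (isBigO_refl (· ^ n) (𝓟 K)).smul (hg.isBigO_one_principal hK)

variable {A : Type*} [NormedRing A] [NormedAlgebra ℝ A]

lemma expTaylor₂_strang_isBigO (hK : IsCompact K) (x y : A) :
    (fun s => expTaylor₂ x s * expTaylor₂ y s * expTaylor₂ x s - expTaylor₂ (2 • x + y) s)
      =O[𝓟 K] (· ^ 3) := by
  have hpoly : ∀ s : ℝ, expTaylor₂ x s * expTaylor₂ y s * expTaylor₂ x s
      - expTaylor₂ (2 • x + y) s = s ^ 3 • (x * (y * x) + x * (x * x)
        + (2⁻¹ : ℝ) • (x * (x * y) + x * (y * y) + y * (y * x) + y * (x * x))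
        + s • (4⁻¹ : ℝ) • (x * (x * (y * y)) + x * (x * (x * x)) + y * (y * (x * x))
            + 2 • (x * (x * (y * x)) + x * (y * (y * x)) + x * (y * (x * x))))
        + s ^ 2 • (4⁻¹ : ℝ) • (x * (x * (y * (y * x))) + x * (x * (y * (x * x)))
            + x * (y * (y * (x * x))))
        + s ^ 3 • (8⁻¹ : ℝ) • (x * (x * (y * (y * (x * x)))))) := by
    intro s
    simp only [expTaylor₂, sq, mul_add, add_mul, smul_add, smul_mul_assoc,
      mul_smul_comm, smul_smul, mul_one, one_mul, mul_assoc]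
    module
  simp_rw [hpoly]
  exact isBigO_pow_smul_of_continuousOn hK (by fun_prop) 3

variable [CompleteSpace A]

lemma isBigO_one_exp_smul (hK : IsCompact K) (b : A) :
    (fun s : ℝ => exp (s • b)) =O[𝓟 K] (fun _ => (1 : ℝ)) :=
  (differentiable_exp_smul_const ℝ b).continuous.continuousOn.isBigO_one_principal hK

lemma exp_smul_sub_expTaylor₂_isBigO (hK : IsCompact K) (b : A) :
    (fun s => exp (s • b) - expTaylor₂ b s) =O[𝓟 K] (· ^ 3) := by
  have hbound : (fun s => exp (s • b) - expTaylor₂ b s) =O[𝓟 K]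
      (fun s => s ^ 3 • (‖b‖ ^ 3 * Real.exp (|s| * ‖b‖))) := by
    refine IsBigO.of_bound 1 (Eventually.of_forall fun s => ?_)
    have h := norm_exp_smul_sub_expTaylor₂_le b s
    rw [norm_smul, Real.norm_eq_abs] at h
    simpa [norm_smul, abs_mul, abs_pow, mul_pow, mul_assoc] using h
  exact hbound.trans (isBigO_pow_smul_of_continuousOn hK (by fun_prop) 3)

lemma exp_smul_sub_strang_isBigO (hK : IsCompact K) (x y : A) :
    (fun s => exp (s • (2 • x + y)) - exp (s • x) * exp (s • y) * exp (s • x))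
      =O[𝓟 K] (· ^ 3) := by
  have hR := fun b : A => exp_smul_sub_expTaylor₂_isBigO hK b
  have hE := fun b : A => isBigO_one_exp_smul hK b
  have hP := fun b : A =>
    ContinuousOn.isBigO_one_principal (f := expTaylor₂ b) (by unfold expTaylor₂; fun_prop) hK
  have htriple : (fun s => exp (s • x) * exp (s • y) * exp (s • x)
      - expTaylor₂ x s * expTaylor₂ y s * expTaylor₂ x s) =O[𝓟 K] (· ^ 3) := by
    have hsplit : ∀ s : ℝ, exp (s • x) * exp (s • y) * exp (s • x)
        - expTaylor₂ x s * expTaylor₂ y s * expTaylor₂ x s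
        = (exp (s • x) - expTaylor₂ x s) * exp (s • y) * exp (s • x)
          + expTaylor₂ x s * (exp (s • y) - expTaylor₂ y s) * exp (s • x)
          + expTaylor₂ x s * expTaylor₂ y s * (exp (s • x) - expTaylor₂ x s) :=
      fun s => by noncomm_ring
    simp_rw [hsplit]
    refine .add (.add ?_ ?_) ?_
    · simpa using ((hR x).mul (hE y)).mul (hE x)
    · simpa using ((hP x).mul (hR y)).mul (hE x)
    · simpa using ((hP x).mul (hP y)).mul (hR x)
  refine ((hR (2 • x + y)).sub htriple |>.sub (expTaylor₂_strang_isBigO hK x y)).congr_left ?_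
  intro s
  abel

end Asymptotics

section SymTrotter

variable {A : Type*} [NormedRing A] [NormedAlgebra ℝ A]

lemma symTrotterProd_zero (a : Fin 0 → A) (s : ℝ) : symTrotterProd 0 a s = 1 := by
  simp [symTrotterProd]

lemma symTrotterProd_succ (k : ℕ) (a : Fin (k + 1) → A) (s : ℝ) :
    symTrotterProd (k + 1) a s
      = exp ((s / 2) • a 0) * symTrotterProd k (fun i => a i.succ) s * exp ((s / 2) • a 0) := by
  simp [symTrotterProd, ← exp_eq_expSeries_sum ℝ, List.ofFn_succ, mul_assoc]

variable [CompleteSpace A] {K : Set ℝ}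

lemma exp_smul_sub_symTrotterProd_isBigO (hK : IsCompact K) (k : ℕ) (a : Fin k → A) :
    (fun s => exp (s • ∑ i, a i) - symTrotterProd k a s) =O[𝓟 K] (· ^ 3) := by
  induction k with
  | zero => simpa [symTrotterProd_zero] using isBigO_zero _ _
  | succ k ih =>
    set x := (2⁻¹ : ℝ) • a 0
    set y := ∑ i : Fin k, a i.succ
    have hx : ∀ s : ℝ, (s / 2) • a 0 = s • x := fun s => by
      rw [smul_smul, div_eq_mul_inv]
    have hsum : ∑ i, a i = 2 • x + y := by
      simp only [Fin.sum_univ_succ, x, y, two_nsmul, ← add_smul]; norm_num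
    have hsplit : ∀ s : ℝ, exp (s • ∑ i, a i) - symTrotterProd (k + 1) a s
        = (exp (s • (2 • x + y)) - exp (s • x) * exp (s • y) * exp (s • x))
          + exp (s • x) * (exp (s • y) - symTrotterProd k (fun i => a i.succ) s) * exp (s • x) :=
      fun s => by rw [symTrotterProd_succ, hx, hsum]; noncomm_ring
    simp_rw [hsplit]
    refine (exp_smul_sub_strang_isBigO hK x y).add ?_
    simpa using ((isBigO_one_exp_smul hK x).mul (ih _)).mul (isBigO_one_exp_smul hK x)

lemma norm_symTrotterProd_mul_le (k : ℕ) (a : Fin k → A) {s : ℝ} (hs : 0 ≤ s) (w : A) :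
    ‖symTrotterProd k a s * w‖ ≤ Real.exp (s * ∑ i, ‖a i‖) * ‖w‖ := by
  induction k generalizing w with
  | zero => simp [symTrotterProd_zero]
  | succ k ih =>
    have hhalf : ‖(s / 2) • a 0‖ = s / 2 * ‖a 0‖ := by
      rw [norm_smul, Real.norm_of_nonneg (by positivity)]
    calc ‖symTrotterProd (k + 1) a s * w‖
        = ‖exp ((s / 2) • a 0) * (symTrotterProd k (fun i => a i.succ) s
            * (exp ((s / 2) • a 0) * w))‖ := by rw [symTrotterProd_succ]; simp only [mul_assoc]
      _ ≤ Real.exp (s / 2 * ‖a 0‖) * (Real.exp (s * ∑ i : Fin k, ‖a i.succ‖)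
            * (Real.exp (s / 2 * ‖a 0‖) * ‖w‖)) := by
          refine (norm_exp_mul_le _ _).trans ?_
          rw [hhalf]
          gcongr
          exact (ih _ _).trans (by gcongr; simpa [hhalf] using norm_exp_mul_le ((s / 2) • a 0) w)
      _ = Real.exp (s * ∑ i, ‖a i‖) * ‖w‖ := by
          rw [Fin.sum_univ_succ, show s * (‖a 0‖ + ∑ i : Fin k, ‖a i.succ‖)
            = s / 2 * ‖a 0‖ + s * ∑ i : Fin k, ‖a i.succ‖ + s / 2 * ‖a 0‖ by ring,
            Real.exp_add, Real.exp_add]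
          ring

lemma exp_smul_eq_pow (b : A) (t : ℝ) {n : ℕ} (hn : n ≠ 0) :
    exp (t • b) = exp ((t / n) • b) ^ n := by
  let : NormedAlgebra ℚ A := .restrictScalars ℚ ℝ A
  rw [← exp_nsmul, ← Nat.cast_smul_eq_nsmul ℝ, smul_smul, mul_div_cancel₀ _ (by simpa)]

end SymTrotter

/-- Symmetric Trotter estimate (Banach-algebra form of Theorem 3.1): for every `T > 0`
there is a constant `C > 0` such that for all `t ∈ [0,T]` and integers `n ≥ 1`,
`‖exp (t (a₁ + ⋯ + a_k)) - σ^{(1)}_{t/n}ⁿ‖ ≤ C t³ / n²`. -/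
theorem symmetric_trotter_estimate {A : Type*} [NormedRing A] [NormedAlgebra ℝ A]
    [CompleteSpace A] (k : ℕ) (a : Fin k → A) :
    ∀ T : ℝ, 0 < T → ∃ C : ℝ, 0 < C ∧
      ∀ t ∈ Set.Icc (0 : ℝ) T, ∀ n : ℕ, 1 ≤ n →
        ‖(NormedSpace.expSeries ℝ A).sum (t • ∑ i, a i) - symTrotterProd k a (t / n) ^ n‖ ≤
          C * t ^ 3 / (n : ℝ) ^ 2 := by
  intro T hT
  set Λ := ∑ i, ‖a i‖
  obtain ⟨C₀, hC₀, hlocal⟩ :=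
    (exp_smul_sub_symTrotterProd_isBigO (K := Icc 0 T) isCompact_Icc k a).exists_pos
  refine ⟨C₀ * Real.exp (T * Λ), by positivity, fun t ⟨ht0, htT⟩ n hn => ?_⟩
  obtain ⟨m, rfl⟩ : ∃ m, n = m + 1 := ⟨n - 1, by omega⟩
  set s := t / (m + 1 : ℕ)
  have hs0 : 0 ≤ s := by positivity
  have hmsT : m * s ≤ T := by
    refine le_trans ?_ htT
    rw [mul_div_assoc', div_le_iff₀ (by positivity)]
    push_cast
    nlinarith
  have hlocal_s : ‖exp (s • ∑ i, a i) - symTrotterProd k a s‖ ≤ C₀ * s ^ 3 := by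
    simpa [Real.norm_of_nonneg hs0] using
      isBigOWith_principal.mp hlocal s ⟨hs0, (div_le_self ht0 (by simp)).trans htT⟩
  have hright : ∀ w : A, ‖w * exp (s • ∑ i, a i)‖ ≤ Real.exp (s * Λ) * ‖w‖ := fun w => by
    refine (norm_mul_exp_le _ _).trans ?_
    rw [mul_comm, norm_smul, Real.norm_of_nonneg hs0]
    gcongr
    exact norm_sum_le _ _
  rw [← exp_eq_expSeries_sum ℝ, exp_smul_eq_pow _ t m.succ_ne_zero]
  calc _ ≤ (m + 1) * Real.exp (s * Λ) ^ m * (C₀ * s ^ 3) :=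
        norm_pow_sub_pow_le (Real.exp_pos _).le (norm_symTrotterProd_mul_le _ a hs0) hright
          hlocal_s m
    _ = C₀ * Real.exp (m * s * Λ) * t ^ 3 / ((m + 1 : ℕ) : ℝ) ^ 2 := by
        rw [← Real.exp_nat_mul]; simp only [s]; push_cast; field_simp
    _ ≤ C₀ * Real.exp (T * Λ) * t ^ 3 / ((m + 1 : ℕ) : ℝ) ^ 2 := by
        gcongr
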